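/- Let A be a complex unital Banach algebra, let e, f ∈ A be invertible positive elements, and let a ∈ A be such that a^†_{e,f} exists. Then the following are equivalent: (i) a is weighted EP with weights e and f; (ii) there exist invertible x, y ∈ A such that a^†_{e,f} a = x a a^†_{e,f} = a a^†_{e,f} y; (iii) there exist x₁, y₁ ∈ A with x₁ z = 0 implying z = 0 and y₁ A = A, such that a^†_{e,f} a = x₁ a a^†_{e,f} = a a^†_{e,f} y₁; (iv) there exist x₂, y₂ ∈ A with x₂ z = 0 implying z = 0, such that a^†_{e,f} a = x₂ a a^†_{e,f} = a a^†_{e,f} y₂; (v) there exist z₁, z₂ ∈ A such that a^†_{e,f} a = a z₁ a^†_{e,f} and a a^†_{e,f} = a^†_{e,f} z₂ a. -/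

import Mathlib

/-!
Common definitions: hermitian and positive elements of a complex unital Banach
algebra, hermitian elements with respect to the equivalent norm induced by an
invertible positive element (weight), and the weighted Moore–Penrose inverse,
both for Banach algebra elements and for bounded linear operators between
Banach spaces.
-/

noncomputable section

/-- An element `a` of a complex unital Banach algebra is hermitian if
`‖exp(i t a)‖ = 1` for all real `t`. -/
def IsHermitianEl {A : Type*} [NormedRing A] [NormedAlgebra ℂ A] (a : A) : Prop :=
  ∀ t : ℝ, ‖NormedSpace.exp ((Complex.I * (t : ℂ)) • a)‖ = 1

/-- An element of a complex unital Banach algebra is positive if it is hermitian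
and its spectrum is contained in `[0, ∞)`. -/
def IsPositiveEl {A : Type*} [NormedRing A] [NormedAlgebra ℂ A] (a : A) : Prop :=
  IsHermitianEl a ∧ spectrum ℂ a ⊆ Complex.ofReal '' Set.Ici (0 : ℝ)

/-- `a` is hermitian in `A^u`, i.e. hermitian for the equivalent norm
`‖x‖_u = ‖u^{1/2} x u^{-1/2}‖`, where `u^{1/2}` is the (unique) invertible
positive square root of the invertible positive weight `u`. -/
def IsHermitianWt {A : Type*} [NormedRing A] [NormedAlgebra ℂ A] (u a : A) : Prop :=
  ∃ s : Aˣ, IsPositiveEl (s : A) ∧ ((s : A)) ^ 2 = u ∧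
    ∀ t : ℝ, ‖(s : A) * NormedSpace.exp ((Complex.I * (t : ℂ)) • a) * ((s⁻¹ : Aˣ) : A)‖ = 1

/-- `b` is the weighted Moore–Penrose inverse of `a` with weights `e` and `f`. -/
def IsWMPI {A : Type*} [NormedRing A] [NormedAlgebra ℂ A] (e f a b : A) : Prop :=
  a * b * a = a ∧ b * a * b = b ∧ IsHermitianWt e (a * b) ∧ IsHermitianWt f (b * a)

/-- `a` is weighted EP with weights `e` and `f`. -/
def IsWEP {A : Type*} [NormedRing A] [NormedAlgebra ℂ A] (e f a : A) : Prop :=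
  ∃ b : A, IsWMPI e f a b ∧ a * b = b * a

/-- `S ∈ L(Y,X)` is the weighted Moore–Penrose inverse of `T ∈ L(X,Y)` with
weights `E ∈ L(Y)` and `F ∈ L(X)`. -/
def IsWMPIop {X Y : Type*} [NormedAddCommGroup X] [NormedSpace ℂ X]
    [NormedAddCommGroup Y] [NormedSpace ℂ Y]
    (E : Y →L[ℂ] Y) (F : X →L[ℂ] X) (T : X →L[ℂ] Y) (S : Y →L[ℂ] X) : Prop :=
  (T.comp S).comp T = T ∧ (S.comp T).comp S = S ∧
    IsHermitianWt E (T.comp S) ∧ IsHermitianWt F (S.comp T)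

/-- `T ∈ L(X)` is weighted EP with weights `E` and `F`. -/
def IsWEPop {X : Type*} [NormedAddCommGroup X] [NormedSpace ℂ X]
    (E F T : X →L[ℂ] X) : Prop :=
  ∃ S : X →L[ℂ] X, IsWMPIop E F T S ∧ T.comp S = S.comp T

/-!
By uniqueness of the weighted Moore–Penrose inverse, `a` is weighted EP iff `a` commutes with the
given `a^†_{e,f}`, and each of (ii)–(v) is an elementary reformulation of this in terms of the
idempotents `a a^†` and `a^† a`.

Uniqueness rests on two facts. A hermitian idempotent `P` satisfies `‖1 - 2P‖ = 1`, since
`exp(iπP) = 1 - 2P`; if two such idempotents `P`, `Q` have the same range, then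
`(1 - 2P)(1 - 2Q) = 1 + 2(Q - P)` is a contraction that is unipotent of order two, which forces
`P = Q`, and the case of equal kernels reduces to this by passing to `1 - P`, `1 - Q`. Secondly the
weights enter only through their square roots, which are unique: if `s² = t²` with spectra in
`[0, ∞)` and `t` invertible, then `(s + c)(s - t) = (s - t)(c - t)`, and for large `c` the spectra
of `s + c` and `c - t` are separated by the circle of radius `c`, so Gelfand's formula gives
`s - t = 0`.
-/

open scoped Nat
open Filter NormedSpace

section Semigroup

variable {M : Type*} [Semigroup M]

theorem isIdempotentElem_of_mul_eq_of_mul_eq {p q : M} (hpq : p * q = q) (hqp : q * p = p) :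
    IsIdempotentElem p := by
  rw [IsIdempotentElem]; nth_rw 2 [← hqp]; rw [← mul_assoc, hpq, hqp]

theorem isIdempotentElem_of_mul_eq_of_mul_eq' {p q : M} (hpq : p * q = p) (hqp : q * p = q) :
    IsIdempotentElem p := by
  rw [IsIdempotentElem]; nth_rw 1 [← hpq]; rw [mul_assoc, hqp, hpq]

theorem IsIdempotentElem.eq_of_eq_mul_of_eq_mul {p q x y : M} (hp : IsIdempotentElem p)
    (hq : IsIdempotentElem q) (hx : IsLeftRegular x) (hqx : q = x * p) (hqy : q = p * y) :
    p = q := by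
  have hpq_eq_q : p * q = q := by rw [hqy, ← mul_assoc, hp.eq]
  have hpq_eq_p : p * q = p := hx (show x * (p * q) = x * p by
    rw [← mul_assoc, ← hqx, hq.eq])
  exact hpq_eq_p.symm.trans hpq_eq_q

theorem mul_comm_of_eq_mul_mul_of_eq_mul_mul {a b z₁ z₂ : M} (h : a * b * a = a)
    (hz₁ : b * a = a * z₁ * b) (hz₂ : a * b = b * z₂ * a) : a * b = b * a :=
  calc a * b = b * z₂ * a * (b * a) := by rw [mul_assoc _ a, ← mul_assoc a, h, ← hz₂]
    _ = b * a := by rw [← hz₂, hz₁, ← mul_assoc, ← mul_assoc, h]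

end Semigroup

section Spectrum

variable {A : Type*} [NormedRing A] [NormedAlgebra ℂ A] [CompleteSpace A]

theorem eq_zero_of_eq_mul_mul_of_spectralRadius_mul_lt_one {u z X : A} (h : X = u * X * z)
    (hρ : spectralRadius ℂ u * spectralRadius ℂ z < 1) : X = 0 := by
  nontriviality A
  have hpow : ∀ n : ℕ, X = u ^ n * X * z ^ n := by
    intro n
    induction n with
    | zero => simp
    | succ n ih =>
      calc X = u * (u ^ n * X * z ^ n) * z := by rw [← ih]; exact h
        _ = u ^ (n + 1) * X * z ^ (n + 1) := by rw [pow_succ' u, pow_succ z]; simp only [mul_assoc]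
  have hfin (a : A) : spectralRadius ℂ a ≠ ⊤ := by
    obtain ⟨k, -, hk⟩ := spectrum.exists_nnnorm_eq_spectralRadius a
    exact hk ▸ ENNReal.coe_ne_top
  have hgelfand := ENNReal.Tendsto.mul
    (spectrum.pow_nnnorm_pow_one_div_tendsto_nhds_spectralRadius u) (Or.inr (hfin z))
    (spectrum.pow_nnnorm_pow_one_div_tendsto_nhds_spectralRadius z) (Or.inr (hfin u))
  obtain ⟨n, hlt, hn⟩ := ((hgelfand.eventually_lt_const hρ).and (eventually_gt_atTop 0)).exists
  have hq : ‖u ^ n‖₊ * ‖z ^ n‖₊ < 1 := by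
    rw [← ENNReal.mul_rpow_of_nonneg _ _ (by positivity)] at hlt
    by_contra! hge
    exact hlt.not_ge (ENNReal.one_le_rpow (by exact_mod_cast hge) (by positivity))
  have hle : ‖X‖ ≤ ‖u ^ n‖ * ‖z ^ n‖ * ‖X‖ :=
    calc ‖X‖ = ‖u ^ n * X * z ^ n‖ := by rw [← hpow n]
      _ ≤ ‖u ^ n‖ * ‖X‖ * ‖z ^ n‖ := norm_mul₃_le
      _ = ‖u ^ n‖ * ‖z ^ n‖ * ‖X‖ := by ring
  have hq' : ‖u ^ n‖ * ‖z ^ n‖ < 1 := by exact_mod_cast hq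
  exact norm_le_zero_iff.mp (by nlinarith [norm_nonneg X])

theorem eq_zero_of_mul_eq_mul_of_spectrum_separated {w z X : A} {r : ℝ} (hr : 0 < r)
    (hw : ∀ k ∈ spectrum ℂ w, r ≤ ‖k‖) (hz : ∀ k ∈ spectrum ℂ z, ‖k‖ < r)
    (h : w * X = X * z) : X = 0 := by
  nontriviality A
  have hw_unit : IsUnit w := spectrum.zero_notMem_iff ℂ |>.mp fun h0 => by
    linarith [hw 0 h0, norm_zero (E := ℂ)]
  lift w to Aˣ using hw_unit
  refine eq_zero_of_eq_mul_mul_of_spectralRadius_mul_lt_one (u := ↑w⁻¹) (z := z) ?_ ?_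
  · rw [mul_assoc, ← h, ← mul_assoc, Units.inv_mul, one_mul]
  obtain ⟨k, hk, hρk⟩ := spectrum.exists_nnnorm_eq_spectralRadius (↑w⁻¹ : A)
  obtain ⟨μ, hμ, hρμ⟩ := spectrum.exists_nnnorm_eq_spectralRadius z
  have hk0 : k ≠ 0 := fun h0 => (spectrum.zero_notMem_iff ℂ).mpr (w⁻¹).isUnit (h0 ▸ hk)
  have hk_inv : r ≤ ‖k‖⁻¹ := by
    have hk' := (spectrum.inv_mem_iff (r := Units.mk0 k hk0) (a := w⁻¹)).mp hk
    simp only [inv_inv, Units.val_inv_eq_inv_val, Units.val_mk0] at hk'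
    simpa using hw _ hk'
  have hkμ : ‖k‖ * ‖μ‖ < 1 := by
    calc ‖k‖ * ‖μ‖ ≤ r⁻¹ * ‖μ‖ := by
          gcongr
          exact (le_inv_comm₀ hr (norm_pos_iff.mpr hk0)).mp hk_inv
      _ < r⁻¹ * r := by gcongr; exact hz μ hμ
      _ = 1 := inv_mul_cancel₀ hr.ne'
  rw [← hρk, ← hρμ, ← ENNReal.coe_mul, ENNReal.coe_lt_one_iff]
  exact_mod_cast hkμ

theorem eq_of_sq_eq_sq_of_spectrum_subset_Ici {s t : A} (ht : IsUnit t)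
    (hs_spec : spectrum ℂ s ⊆ Complex.ofReal '' Set.Ici 0)
    (ht_spec : spectrum ℂ t ⊆ Complex.ofReal '' Set.Ici 0) (h : s ^ 2 = t ^ 2) : s = t := by
  set c : ℝ := ‖t‖ * ‖(1 : A)‖ + 1
  have hc : 0 < c := by positivity
  have hsylvester : (algebraMap ℂ A c + s) * (s - t) = (s - t) * (algebraMap ℂ A c - t) := by
    rw [sq, sq] at h
    simp only [add_mul, mul_sub, sub_mul, Algebra.commutes, h]
    abel
  refine sub_eq_zero.mp (eq_zero_of_mul_eq_mul_of_spectrum_separated hc ?_ ?_ hsylvester)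
  · intro k hk
    rw [← spectrum.singleton_add_eq] at hk
    obtain ⟨_, rfl, _, hμ, rfl⟩ := hk
    obtain ⟨r, hr : 0 ≤ r, rfl⟩ := hs_spec hμ
    show c ≤ ‖(c : ℂ) + r‖
    rw [← Complex.ofReal_add, Complex.norm_real, Real.norm_of_nonneg (by positivity)]
    linarith
  · intro k hk
    rw [← spectrum.singleton_sub_eq] at hk
    obtain ⟨_, rfl, μ, hμ, rfl⟩ := hk
    have hμ_le := spectrum.norm_le_norm_mul_of_mem hμ
    have hμ0 : μ ≠ 0 := fun h0 => (spectrum.zero_notMem_iff ℂ).mpr ht (h0 ▸ hμ)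
    obtain ⟨r, hr : 0 ≤ r, rfl⟩ := ht_spec hμ
    rw [Complex.norm_real, Real.norm_of_nonneg hr] at hμ_le
    have hr0 : 0 < r := hr.lt_of_ne (by rintro rfl; simp at hμ0)
    show ‖(c : ℂ) - r‖ < c
    rw [← Complex.ofReal_sub, Complex.norm_real, Real.norm_eq_abs, abs_lt]
    constructor <;> linarith

end Spectrum

theorem NormedSpace.exp_smul_of_isIdempotentElem {𝕂 𝔸 : Type*} [RCLike 𝕂] [NormedRing 𝔸]
    [NormedAlgebra 𝕂 𝔸] [CompleteSpace 𝔸] {p : 𝔸} (hp : IsIdempotentElem p) (c : 𝕂) :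
    exp (c • p) = 1 - p + exp c • p := by
  have hsum : HasSum (fun n : ℕ => (if n = 0 then 1 - p else 0) + ((n !⁻¹ : 𝕂) • c ^ n) • p)
      (1 - p + exp c • p) :=
    (hasSum_ite_eq 0 (1 - p)).add ((exp_series_hasSum_exp' c).smul_const p)
  refine (exp_series_hasSum_exp' (𝕂 := 𝕂) (c • p)).unique (hsum.congr_fun fun n => ?_)
  rcases n with _ | n
  · simp
  · simp [smul_pow, hp.pow_succ_eq, smul_smul]

section Reflection

variable {A : Type*} [NormedRing A] [NormedAlgebra ℝ A]

theorem eq_zero_of_mul_self_eq_zero_of_norm_one_add_le_one {d : A} (hd : d * d = 0)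
    (h : ‖1 + d‖ ≤ 1) : d = 0 := by
  have hpow (n : ℕ) : (1 + d) ^ n = 1 + n • d := by
    induction n with
    | zero => simp
    | succ n ih =>
      rw [pow_succ, ih, add_mul, one_mul, mul_add, mul_one, smul_mul_assoc, hd, smul_zero,
        succ_nsmul]
      abel
  have hbound (n : ℕ) (hn : 0 < n) : n * ‖d‖ ≤ 1 + ‖(1 : A)‖ :=
    calc n * ‖d‖ = ‖(1 + d) ^ n - 1‖ := by
          rw [hpow, add_sub_cancel_left, RCLike.norm_nsmul ℝ, nsmul_eq_mul]
      _ ≤ ‖(1 + d) ^ n‖ + ‖(1 : A)‖ := norm_sub_le _ _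
      _ ≤ 1 + ‖(1 : A)‖ := by
          gcongr
          exact (norm_pow_le' _ hn).trans (pow_le_one₀ (norm_nonneg _) h)
  by_contra hd0
  have hpos : 0 < ‖d‖ := norm_pos_iff.mpr hd0
  obtain ⟨n, hn⟩ := exists_nat_gt ((1 + ‖(1 : A)‖) / ‖d‖)
  have hn0 : 0 < n := Nat.cast_pos.mp (lt_trans (by positivity) hn)
  rw [div_lt_iff₀ hpos] at hn
  linarith [hbound n hn0]

theorem eq_of_mul_eq_of_mul_eq_of_norm_one_sub_two_smul_le_one {P Q : A}
    (hPQ : P * Q = Q) (hQP : Q * P = P)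
    (hP : ‖1 - (2 : ℝ) • P‖ ≤ 1) (hQ : ‖1 - (2 : ℝ) • Q‖ ≤ 1) : P = Q := by
  have hPP := (isIdempotentElem_of_mul_eq_of_mul_eq hPQ hQP).eq
  have hQQ := (isIdempotentElem_of_mul_eq_of_mul_eq hQP hPQ).eq
  have hprod : (1 - (2 : ℝ) • P) * (1 - (2 : ℝ) • Q) = 1 + (2 : ℝ) • (Q - P) := by
    simp only [sub_mul, mul_sub, one_mul, mul_one, smul_mul_smul_comm, hPQ]
    module
  have hd : (2 : ℝ) • (Q - P) * ((2 : ℝ) • (Q - P)) = 0 := by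
    simp only [smul_mul_smul_comm, sub_mul, mul_sub, hPP, hQQ, hPQ, hQP, sub_self, smul_zero]
  have h0 := eq_zero_of_mul_self_eq_zero_of_norm_one_add_le_one hd
    (hprod ▸ (norm_mul_le _ _).trans (by nlinarith [norm_nonneg (1 - (2 : ℝ) • P)]))
  rw [smul_eq_zero, sub_eq_zero] at h0
  exact (h0.resolve_left two_ne_zero).symm

theorem eq_of_mul_eq_of_mul_eq_of_norm_one_sub_two_smul_le_one' {P Q : A}
    (hPQ : P * Q = P) (hQP : Q * P = Q)
    (hP : ‖1 - (2 : ℝ) • P‖ ≤ 1) (hQ : ‖1 - (2 : ℝ) • Q‖ ≤ 1) : P = Q := by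
  have hreflect (R : A) : ‖1 - (2 : ℝ) • (1 - R)‖ = ‖1 - (2 : ℝ) • R‖ := by
    rw [← norm_neg]; congr 1; module
  have := eq_of_mul_eq_of_mul_eq_of_norm_one_sub_two_smul_le_one (P := 1 - P) (Q := 1 - Q)
    (by simp only [sub_mul, mul_sub, one_mul, mul_one, hPQ]; abel)
    (by simp only [sub_mul, mul_sub, one_mul, mul_one, hQP]; abel)
    (by rwa [hreflect]) (by rwa [hreflect])
  simpa using this

end Reflection

section WeightedInverse

variable {A : Type*} [NormedRing A] [NormedAlgebra ℂ A] [CompleteSpace A]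

theorem IsHermitianEl.norm_one_sub_two_smul_eq_one {P : A} (hP : IsHermitianEl P)
    (hPP : IsIdempotentElem P) : ‖1 - (2 : ℝ) • P‖ = 1 := by
  have h := hP Real.pi
  rw [exp_smul_of_isIdempotentElem hPP, ← Complex.exp_eq_exp_ℂ, mul_comm,
    Complex.exp_pi_mul_I, neg_one_smul] at h
  convert h using 2
  module

theorem IsHermitianEl.eq_of_mul_eq_of_mul_eq {P Q : A} (hP : IsHermitianEl P)
    (hQ : IsHermitianEl Q) (hPQ : P * Q = Q) (hQP : Q * P = P) : P = Q :=
  eq_of_mul_eq_of_mul_eq_of_norm_one_sub_two_smul_le_one hPQ hQP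
    (hP.norm_one_sub_two_smul_eq_one (isIdempotentElem_of_mul_eq_of_mul_eq hPQ hQP)).le
    (hQ.norm_one_sub_two_smul_eq_one (isIdempotentElem_of_mul_eq_of_mul_eq hQP hPQ)).le

theorem IsHermitianEl.eq_of_mul_eq_of_mul_eq' {P Q : A} (hP : IsHermitianEl P)
    (hQ : IsHermitianEl Q) (hPQ : P * Q = P) (hQP : Q * P = Q) : P = Q :=
  eq_of_mul_eq_of_mul_eq_of_norm_one_sub_two_smul_le_one' hPQ hQP
    (hP.norm_one_sub_two_smul_eq_one (isIdempotentElem_of_mul_eq_of_mul_eq' hPQ hQP)).le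
    (hQ.norm_one_sub_two_smul_eq_one (isIdempotentElem_of_mul_eq_of_mul_eq' hQP hPQ)).le

theorem IsHermitianWt.exists_conj_isHermitianEl {u p q : A} (hp : IsHermitianWt u p)
    (hq : IsHermitianWt u q) :
    ∃ g : ConjAct Aˣ, IsHermitianEl (g • p) ∧ IsHermitianEl (g • q) := by
  obtain ⟨s, hs, hs_sq, hsp⟩ := hp
  obtain ⟨s', hs', hs'_sq, hs'q⟩ := hq
  obtain rfl : s = s' := Units.ext <|
    eq_of_sq_eq_sq_of_spectrum_subset_Ici s'.isUnit hs.2 hs'.2 (hs_sq.trans hs'_sq.symm)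
  have hconj (x : A) (hx : ∀ t : ℝ, ‖(s : A) * exp ((Complex.I * t) • x) * ↑s⁻¹‖ = 1) :
      IsHermitianEl (ConjAct.toConjAct s • x) := fun t => by
    let : NormedAlgebra ℚ A := NormedAlgebra.restrictScalars ℚ ℂ A
    rw [smul_comm, exp_smul, ConjAct.units_smul_def, ConjAct.ofConjAct_toConjAct]
    exact hx t
  exact ⟨_, hconj p hsp, hconj q hs'q⟩

theorem IsHermitianWt.eq_of_mul_eq_of_mul_eq {u p q : A} (hp : IsHermitianWt u p)
    (hq : IsHermitianWt u q) (hpq : p * q = q) (hqp : q * p = p) : p = q := by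
  obtain ⟨g, hP, hQ⟩ := hp.exists_conj_isHermitianEl hq
  exact smul_left_cancel g <|
    hP.eq_of_mul_eq_of_mul_eq hQ (by rw [← smul_mul', hpq]) (by rw [← smul_mul', hqp])

theorem IsHermitianWt.eq_of_mul_eq_of_mul_eq' {u p q : A} (hp : IsHermitianWt u p)
    (hq : IsHermitianWt u q) (hpq : p * q = p) (hqp : q * p = q) : p = q := by
  obtain ⟨g, hP, hQ⟩ := hp.exists_conj_isHermitianEl hq
  exact smul_left_cancel g <|
    hP.eq_of_mul_eq_of_mul_eq' hQ (by rw [← smul_mul', hpq]) (by rw [← smul_mul', hqp])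

theorem IsWMPI.unique {e f a b c : A} (hb : IsWMPI e f a b) (hc : IsWMPI e f a c) : b = c := by
  obtain ⟨hb₁, hb₂, hb₃, hb₄⟩ := hb
  obtain ⟨hc₁, hc₂, hc₃, hc₄⟩ := hc
  have hab : a * b = a * c := hb₃.eq_of_mul_eq_of_mul_eq hc₃
    (by rw [← mul_assoc, hb₁]) (by rw [← mul_assoc, hc₁])
  have hba : b * a = c * a := hb₄.eq_of_mul_eq_of_mul_eq' hc₄
    (by rw [mul_assoc, ← mul_assoc a, hc₁]) (by rw [mul_assoc, ← mul_assoc a, hb₁])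
  calc b = b * a * b := hb₂.symm
    _ = c * (a * c) := by rw [hba, mul_assoc, hab]
    _ = c := by rw [← mul_assoc, hc₂]

theorem IsWMPI.isWEP_iff {e f a b : A} (hb : IsWMPI e f a b) : IsWEP e f a ↔ a * b = b * a :=
  ⟨fun ⟨_, hc, hcomm⟩ => hb.unique hc ▸ hcomm, fun h => ⟨b, hb, h⟩⟩

end WeightedInverse

theorem weighted_EP_iff_factorization_xy_general
    {A : Type*} [NormedRing A] [NormedAlgebra ℂ A] [CompleteSpace A]
    (e f a : A)
    (ad : A) (had : IsWMPI e f a ad) :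
    (IsWEP e f a ↔
      ∃ x y : Aˣ, ad * a = (x : A) * (a * ad) ∧ ad * a = (a * ad) * (y : A)) ∧
    (IsWEP e f a ↔
      ∃ x₁ y₁ : A, (∀ z : A, x₁ * z = 0 → z = 0) ∧ (∀ w : A, ∃ z : A, y₁ * z = w) ∧
        ad * a = x₁ * (a * ad) ∧ ad * a = (a * ad) * y₁) ∧
    (IsWEP e f a ↔
      ∃ x₂ y₂ : A, (∀ z : A, x₂ * z = 0 → z = 0) ∧
        ad * a = x₂ * (a * ad) ∧ ad * a = (a * ad) * y₂) ∧
    (IsWEP e f a ↔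
      ∃ z₁ z₂ : A, ad * a = a * z₁ * ad ∧ a * ad = ad * z₂ * a) := by
  have hp : IsIdempotentElem (a * ad) := by rw [IsIdempotentElem, ← mul_assoc, had.1]
  have hq : IsIdempotentElem (ad * a) := by rw [IsIdempotentElem, ← mul_assoc, had.2.1]
  have hcomm {x y : A} (hx : IsLeftRegular x) (hxq : ad * a = x * (a * ad))
      (hyq : ad * a = a * ad * y) : a * ad = ad * a :=
    hp.eq_of_eq_mul_of_eq_mul hq hx hxq hyq
  rw [had.isWEP_iff]
  simp only [← isLeftRegular_iff_right_eq_zero_of_mul]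
  refine ⟨⟨?_, ?_⟩, ⟨?_, ?_⟩, ⟨?_, ?_⟩, ⟨?_, ?_⟩⟩
  · exact fun h => ⟨1, 1, by rw [Units.val_one, one_mul, h], by rw [Units.val_one, mul_one, h]⟩
  · exact fun ⟨x, _, hx, hy⟩ => hcomm x.isRegular.left hx hy
  · exact fun h => ⟨1, 1, isRegular_one.left, fun w => ⟨w, one_mul w⟩, by rw [one_mul, h],
      by rw [mul_one, h]⟩
  · exact fun ⟨_, _, hx, _, hxq, hyq⟩ => hcomm hx hxq hyq
  · exact fun h => ⟨1, 1, isRegular_one.left, by rw [one_mul, h], by rw [mul_one, h]⟩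
  · exact fun ⟨_, _, hx, hxq, hyq⟩ => hcomm hx hxq hyq
  · exact fun h => ⟨ad * a, a * ad, by rw [← mul_assoc, had.1, h], by rw [← mul_assoc, had.2.1, h]⟩
  · exact fun ⟨_, _, hz₁, hz₂⟩ => mul_comm_of_eq_mul_mul_of_eq_mul_mul had.1 hz₁ hz₂

/-- `a` is weighted EP with weights `e` and `f` iff
(ii) `a^†_{e,f} a = x a a^†_{e,f} = a a^†_{e,f} y` for invertible `x, y`; iff
(iii) the same with `x₁` left-injective and `y₁` left-surjective; iff
(iv) the same with `x₂` left-injective and arbitrary `y₂`; iff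
(v) `a^†_{e,f} a = a z₁ a^†_{e,f}` and `a a^†_{e,f} = a^†_{e,f} z₂ a` for some
`z₁, z₂ ∈ A`. -/
theorem weighted_EP_iff_factorization_xy
    {A : Type*} [NormedRing A] [NormedAlgebra ℂ A] [CompleteSpace A]
    (e f a : A)
    (he : IsPositiveEl e ∧ IsUnit e) (hf : IsPositiveEl f ∧ IsUnit f)
    (ad : A) (had : IsWMPI e f a ad) :
    (IsWEP e f a ↔
      ∃ x y : Aˣ, ad * a = (x : A) * (a * ad) ∧ ad * a = (a * ad) * (y : A)) ∧
    (IsWEP e f a ↔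
      ∃ x₁ y₁ : A, (∀ z : A, x₁ * z = 0 → z = 0) ∧ (∀ w : A, ∃ z : A, y₁ * z = w) ∧
        ad * a = x₁ * (a * ad) ∧ ad * a = (a * ad) * y₁) ∧
    (IsWEP e f a ↔
      ∃ x₂ y₂ : A, (∀ z : A, x₂ * z = 0 → z = 0) ∧
        ad * a = x₂ * (a * ad) ∧ ad * a = (a * ad) * y₂) ∧
    (IsWEP e f a ↔
      ∃ z₁ z₂ : A, ad * a = a * z₁ * ad ∧ a * ad = ad * z₂ * a) :=
  weighted_EP_iff_factorization_xy_general e f a ad had
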